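/- Let r_m, r_a ∈ ℝ³ and ρ₁, ρ₂ > 0, and set A = ρ₁ r_m r_mᵀ + ρ₂ r_a r_aᵀ. Then the symmetric matrix Ā := (1/2)(tr(A)·I − A) is positive definite if and only if r_m and r_a are linearly independent (equivalently, r_m × r_a ≠ 0). -/

import Mathlib

/-!
By Lagrange's identity `|r|²|x|² - (r ⬝ x)² = |r × x|²`, the quadratic form of `Ā` is
`xᵀ Ā x = (ρ₁ |r_m × x|² + ρ₂ |r_a × x|²) / 2`. It vanishes at some `x ≠ 0` exactly when such
an `x` is parallel to both `r_m` and `r_a`, which happens exactly when `r_m × r_a = 0`.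
-/

open Matrix

/-- `Ā = (1/2)(tr(A)·I - A)`. -/
noncomputable def abar (A : Matrix (Fin 3) (Fin 3) ℝ) : Matrix (Fin 3) (Fin 3) ℝ :=
  (1/2 : ℝ) • (Matrix.trace A • (1 : Matrix (Fin 3) (Fin 3) ℝ) - A)

section CrossProduct

variable {F : Type*} [Field F]

lemma exists_smul_eq_of_cross_eq_zero {v x : Fin 3 → F} (hx : x ≠ 0) (h : v ⨯₃ x = 0) :
    ∃ a : F, a • x = v := by
  by_contra! hv
  exact crossProduct_ne_zero_iff_linearIndependent.mpr (linearIndependent_fin2.mpr ⟨hx, hv⟩) h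

lemma cross_eq_zero_iff_exists_cross_eq_zero {v w : Fin 3 → F} :
    v ⨯₃ w = 0 ↔ ∃ x ≠ 0, v ⨯₃ x = 0 ∧ w ⨯₃ x = 0 := by
  constructor
  · intro h
    by_cases hv : v = 0
    · by_cases hw : w = 0
      · obtain ⟨x, hx⟩ := exists_ne (0 : Fin 3 → F)
        exact ⟨x, hx, by simp [hv, hw]⟩
      · exact ⟨w, hw, by simp [hv], cross_self w⟩
    · exact ⟨v, hv, cross_self v, by rw [← cross_anticomm, h, neg_zero]⟩
  · rintro ⟨x, hx, hvx, hwx⟩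
    obtain ⟨a, rfl⟩ := exists_smul_eq_of_cross_eq_zero hx hvx
    obtain ⟨b, rfl⟩ := exists_smul_eq_of_cross_eq_zero hx hwx
    simp [cross_self]

end CrossProduct

lemma dotProduct_vecMulVec_self_mulVec {n R : Type*} [Fintype n] [CommSemiring R] (r x : n → R) :
    x ⬝ᵥ vecMulVec r r *ᵥ x = (r ⬝ᵥ x) ^ 2 := by
  rw [vecMulVec_mulVec, op_smul_eq_smul, dotProduct_smul, smul_eq_mul, dotProduct_comm, sq]

lemma dotProduct_abar_mulVec (A : Matrix (Fin 3) (Fin 3) ℝ) (x : Fin 3 → ℝ) :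
    x ⬝ᵥ abar A *ᵥ x = (A.trace * (x ⬝ᵥ x) - x ⬝ᵥ A *ᵥ x) / 2 := by
  simp only [abar, smul_mulVec, sub_mulVec, one_mulVec, dotProduct_smul, dotProduct_sub,
    smul_eq_mul]
  ring

lemma dotProduct_abar_smul_vecMulVec_add_mulVec (ρ₁ ρ₂ : ℝ) (rm ra x : Fin 3 → ℝ) :
    x ⬝ᵥ abar (ρ₁ • vecMulVec rm rm + ρ₂ • vecMulVec ra ra) *ᵥ x =
      (ρ₁ * ((rm ⨯₃ x) ⬝ᵥ (rm ⨯₃ x)) + ρ₂ * ((ra ⨯₃ x) ⬝ᵥ (ra ⨯₃ x))) / 2 := by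
  simp only [dotProduct_abar_mulVec, trace_add, trace_smul, trace_vecMulVec, add_mulVec,
    smul_mulVec, dotProduct_add, dotProduct_smul, dotProduct_vecMulVec_self_mulVec,
    cross_dot_cross, smul_eq_mul, dotProduct_comm x rm, dotProduct_comm x ra]
  ring

lemma Matrix.IsHermitian.abar {A : Matrix (Fin 3) (Fin 3) ℝ} (hA : A.IsHermitian) :
    (abar A).IsHermitian :=
  ((isHermitian_one.smul (.all _)).sub hA).smul (.all _)

lemma isHermitian_vecMulVec_self {n R : Type*} [CommSemiring R] [StarRing R] [TrivialStar R]
    (r : n → R) : (vecMulVec r r).IsHermitian := by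
  ext i j
  simp [vecMulVec_apply, mul_comm]

section Positivity

variable {n R : Type*} [Fintype n] [Ring R] [LinearOrder R] [IsStrictOrderedRing R]

lemma dotProduct_self_nonneg (v : n → R) : 0 ≤ v ⬝ᵥ v :=
  Finset.sum_nonneg fun i _ => mul_self_nonneg (v i)

lemma dotProduct_self_pos {v : n → R} (hv : v ≠ 0) : 0 < v ⬝ᵥ v :=
  (dotProduct_self_nonneg v).lt_of_ne' (dotProduct_self_eq_zero.not.mpr hv)

lemma add_mul_dotProduct_self_pos_iff {ρ₁ ρ₂ : R} (hρ₁ : 0 < ρ₁) (hρ₂ : 0 < ρ₂)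
    (u v : n → R) :
    0 < ρ₁ * (u ⬝ᵥ u) + ρ₂ * (v ⬝ᵥ v) ↔ u ≠ 0 ∨ v ≠ 0 := by
  constructor
  · contrapose!
    rintro ⟨rfl, rfl⟩
    simp
  · rintro (hu | hv)
    · exact add_pos_of_pos_of_nonneg (mul_pos hρ₁ (dotProduct_self_pos hu))
        (mul_nonneg hρ₂.le (dotProduct_self_nonneg v))
    · exact add_pos_of_nonneg_of_pos (mul_nonneg hρ₁.le (dotProduct_self_nonneg u))
        (mul_pos hρ₂ (dotProduct_self_pos hv))

end Positivity

/-- For `ρ₁, ρ₂ > 0` and `A = ρ₁ r_m r_mᵀ + ρ₂ r_a r_aᵀ`, the matrix `Ā` is positive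
definite iff `r_m, r_a` are linearly independent, equivalently `r_m × r_a ≠ 0`. -/
theorem stmt7 (rm ra : Fin 3 → ℝ) (ρ₁ ρ₂ : ℝ) (hρ₁ : 0 < ρ₁) (hρ₂ : 0 < ρ₂) :
    ((abar (ρ₁ • Matrix.vecMulVec rm rm + ρ₂ • Matrix.vecMulVec ra ra)).PosDef ↔
      LinearIndependent ℝ ![rm, ra]) ∧
    (LinearIndependent ℝ ![rm, ra] ↔ rm ⨯₃ ra ≠ 0) := by
  have hindep : LinearIndependent ℝ ![rm, ra] ↔ rm ⨯₃ ra ≠ 0 :=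
    crossProduct_ne_zero_iff_linearIndependent.symm
  have hherm : (abar (ρ₁ • vecMulVec rm rm + ρ₂ • vecMulVec ra ra)).IsHermitian :=
    (((isHermitian_vecMulVec_self rm).smul (.all _)).add
      ((isHermitian_vecMulVec_self ra).smul (.all _))).abar
  refine ⟨?_, hindep⟩
  rw [hindep, posDef_iff_dotProduct_mulVec, and_iff_right hherm, ne_eq,
    cross_eq_zero_iff_exists_cross_eq_zero, not_exists]
  refine forall_congr' fun x => ?_
  rw [star_trivial, dotProduct_abar_smul_vecMulVec_add_mulVec,
    div_pos_iff_of_pos_right two_pos, add_mul_dotProduct_self_pos_iff hρ₁ hρ₂, not_and, not_and_or]
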